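/- Let k ∈ ℕ, μ_b ∈ ℝ^k, F ⊆ ℝ^k, ε ≥ 0 with ε ≠ 1, and define P_C = {v ∈ ℝ^k : for all μ ∈ F, (1/|1+ε|)·⟨v, μ_b⟩ ≤ ⟨v, μ⟩ ≤ (1/|1−ε|)·⟨v, μ_b⟩}. Suppose μ* ∈ F and w ∈ ℝ^k satisfy ⟨w, μ*⟩ > (1/|1−ε|)·⟨w, μ_b⟩. Then (i) w ∉ P_C, (ii) ⟨w, |1−ε|·μ* − μ_b⟩ > 0, and (iii) every v ∈ P_C satisfies ⟨v, |1−ε|·μ* − μ_b⟩ ≤ 0; that is, the hyperplane {v : ⟨v, |1−ε|·μ* − μ_b⟩ = 0} separates w from P_C. -/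

import Mathlib

open Finset

theorem sum_mul_const_mul_sub {ι R : Type*} [Fintype ι] [CommRing R] (v μ ν : ι → R) (a : R) :
    ∑ i, v i * (a * μ i - ν i) = a * ∑ i, v i * μ i - ∑ i, v i * ν i := by
  simp only [mul_sub, mul_sum, sum_sub_distrib, mul_left_comm]

section OrderedField

variable {𝕜 : Type*} [Field 𝕜] [LinearOrder 𝕜] [IsStrictOrderedRing 𝕜] {a b x : 𝕜}

theorem one_div_mul_lt_iff_sub_pos (ha : 0 < a) : 1 / a * b < x ↔ 0 < a * x - b := by
  rw [one_div_mul_eq_div, div_lt_iff₀ ha, sub_pos, mul_comm]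

theorem le_one_div_mul_iff_sub_nonpos (ha : 0 < a) : x ≤ 1 / a * b ↔ a * x - b ≤ 0 := by
  rw [one_div_mul_eq_div, le_div_iff₀ ha, sub_nonpos, mul_comm]

end OrderedField

theorem separation_oracle_upper_consistency_case_general
    (k : ℕ) (μb : Fin k → ℝ) (F : Set (Fin k → ℝ)) (ε : ℝ)
    (hε1 : ε ≠ 1)
    (μstar : Fin k → ℝ) (hμstar : μstar ∈ F) (w : Fin k → ℝ)
    (hw : ∑ i, w i * μstar i > (1 / |1 - ε|) * ∑ i, w i * μb i) :
    w ∉ {v : Fin k → ℝ | ∀ μ ∈ F,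
        (1 / |1 + ε|) * (∑ i, v i * μb i) ≤ ∑ i, v i * μ i ∧
        ∑ i, v i * μ i ≤ (1 / |1 - ε|) * (∑ i, v i * μb i)} ∧
    ∑ i, w i * (|1 - ε| * μstar i - μb i) > 0 ∧
    ∀ v ∈ {v : Fin k → ℝ | ∀ μ ∈ F,
        (1 / |1 + ε|) * (∑ i, v i * μb i) ≤ ∑ i, v i * μ i ∧
        ∑ i, v i * μ i ≤ (1 / |1 - ε|) * (∑ i, v i * μb i)},
      ∑ i, v i * (|1 - ε| * μstar i - μb i) ≤ 0 := by
  have ha : 0 < |1 - ε| := abs_pos.mpr (sub_ne_zero.mpr hε1.symm)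
  refine ⟨fun hw_mem => (hw_mem μstar hμstar).2.not_gt hw, ?_, fun v hv => ?_⟩
  · rw [sum_mul_const_mul_sub]
    exact (one_div_mul_lt_iff_sub_pos ha).1 hw
  · rw [sum_mul_const_mul_sub]
    exact (le_one_div_mul_iff_sub_nonpos ha).1 (hv μstar hμstar).2

/-- Correctness of the second rejection case of the separation oracle:
if `⟨w, μ*⟩ > (1/|1−ε|)⟨w, μ_b⟩` for some `μ* ∈ F`, then `w ∉ P_C`,
`⟨w, |1−ε|μ* − μ_b⟩ > 0`, and every `v ∈ P_C` satisfies
`⟨v, |1−ε|μ* − μ_b⟩ ≤ 0`. -/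
theorem separation_oracle_upper_consistency_case
    (k : ℕ) (μb : Fin k → ℝ) (F : Set (Fin k → ℝ)) (ε : ℝ)
    (hε : 0 ≤ ε) (hε1 : ε ≠ 1)
    (μstar : Fin k → ℝ) (hμstar : μstar ∈ F) (w : Fin k → ℝ)
    (hw : ∑ i, w i * μstar i > (1 / |1 - ε|) * ∑ i, w i * μb i) :
    w ∉ {v : Fin k → ℝ | ∀ μ ∈ F,
        (1 / |1 + ε|) * (∑ i, v i * μb i) ≤ ∑ i, v i * μ i ∧
        ∑ i, v i * μ i ≤ (1 / |1 - ε|) * (∑ i, v i * μb i)} ∧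
    ∑ i, w i * (|1 - ε| * μstar i - μb i) > 0 ∧
    ∀ v ∈ {v : Fin k → ℝ | ∀ μ ∈ F,
        (1 / |1 + ε|) * (∑ i, v i * μb i) ≤ ∑ i, v i * μ i ∧
        ∑ i, v i * μ i ≤ (1 / |1 - ε|) * (∑ i, v i * μb i)},
      ∑ i, v i * (|1 - ε| * μstar i - μb i) ≤ 0 :=
  separation_oracle_upper_consistency_case_general k μb F ε hε1 μstar hμstar w hw
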